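/- arXiv:2406.12771 — 3 statements merged into one kernel-verified Lean document; each statement's English description precedes it below -/
import Mathlib

section
/- Let g : ℝ^n → ℝ be μ-strongly convex and C_f-smooth perturbation f be C_f-smooth. Fix x, let y* minimize g over the affine set {y : By = b}, and for δ ∈ [0, μ/(2C_f)] let y*_δ minimize g + δ·f over the same set. Then ‖y*_δ − y*‖ ≤ (2δ/μ)·‖∇f(y*)‖. -/
/-!
Put `d = y*_δ - y*`; since `B d = 0`, the whole line through either minimizer in direction `d`
stays feasible, so first-order optimality gives `Dg(y*) d = 0` and
`Dg(y*_δ) d + δ ⟪∇f(y*_δ), d⟫ = 0`. Strong convexity makes `Dg` strongly monotone,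
`μ ‖d‖² ≤ Dg(y*_δ) d - Dg(y*) d = -δ ⟪∇f(y*_δ), d⟫ ≤ δ (‖∇f(y*)‖ + C_f ‖d‖) ‖d‖`,
and `δ C_f ≤ μ / 2` absorbs the last term into the left-hand side.
-/

open InnerProductSpace Set

section NormedSpace

variable {E : Type*} [NormedAddCommGroup E] [NormedSpace ℝ E]

theorem IsMinOn.hasFDerivAt_apply_eq_zero {φ : E → ℝ} {φ' : E →L[ℝ] ℝ} {s : Set E} {x v : E}
    (hmin : IsMinOn φ s x) (hφ : HasFDerivAt φ φ' x) (hv : ∀ t : ℝ, x + t • v ∈ s) :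
    φ' v = 0 := by
  have hline : HasDerivAt (fun t : ℝ => x + t • v) v 0 := by
    simpa using ((hasDerivAt_id (0 : ℝ)).smul_const v).const_add x
  have hloc : IsLocalMin (fun t : ℝ => φ (x + t • v)) 0 :=
    Filter.Eventually.of_forall fun t => by simpa using hmin (hv t)
  exact hloc.hasDerivAt_eq_zero (hφ.comp_hasDerivAt_of_eq 0 hline (by simp))

theorem ConvexOn.apply_sub_le_of_hasFDerivAt {s : Set E} {h : E → ℝ} {h₁ h₂ : E →L[ℝ] ℝ}
    {x y : E} (hh : ConvexOn ℝ s h) (hx : x ∈ s) (hy : y ∈ s) (hx' : HasFDerivAt h h₁ x)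
    (hy' : HasFDerivAt h h₂ y) : h₁ (y - x) ≤ h₂ (y - x) := by
  set L : ℝ →ᵃ[ℝ] E := AffineMap.lineMap x y
  have hconv : ConvexOn ℝ (L ⁻¹' s) (h ∘ L) := hh.comp_affineMap L
  have hL0 : L 0 = x := AffineMap.lineMap_apply_zero x y
  have hL1 : L 1 = y := AffineMap.lineMap_apply_one x y
  have h0 : HasDerivAt (h ∘ L) (h₁ (y - x)) 0 :=
    (hL0 ▸ hx').comp_hasDerivAt 0 AffineMap.hasDerivAt_lineMap
  have h1 : HasDerivAt (h ∘ L) (h₂ (y - x)) 1 :=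
    (hL1 ▸ hy').comp_hasDerivAt 1 AffineMap.hasDerivAt_lineMap
  have h0s : (0 : ℝ) ∈ L ⁻¹' s := by simpa [mem_preimage, hL0] using hx
  have h1s : (1 : ℝ) ∈ L ⁻¹' s := by simpa [mem_preimage, hL1] using hy
  exact (hconv.le_slope_of_hasDerivAt h0s h1s zero_lt_one h0).trans
    (hconv.slope_le_of_hasDerivAt h0s h1s zero_lt_one h1)

end NormedSpace

theorem StrongConvexOn.mul_norm_sub_sq_le_of_hasFDerivAt {E : Type*} [NormedAddCommGroup E]
    [InnerProductSpace ℝ E] {s : Set E} {g : E → ℝ} {m : ℝ} {g₁ g₂ : E →L[ℝ] ℝ} {x y : E}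
    (hg : StrongConvexOn s m g) (hx : x ∈ s) (hy : y ∈ s) (hx' : HasFDerivAt g g₁ x)
    (hy' : HasFDerivAt g g₂ y) : m * ‖y - x‖ ^ 2 ≤ g₂ (y - x) - g₁ (y - x) := by
  have hq : ∀ z : E, HasFDerivAt (fun z => m / 2 * ‖z‖ ^ 2) ((m / 2) • 2 • innerSL ℝ z) z :=
    fun z => (hasStrictFDerivAt_norm_sq z).hasFDerivAt.const_mul (m / 2)
  have hmono := (strongConvexOn_iff_convex.1 hg).apply_sub_le_of_hasFDerivAt hx hy
    (hx'.sub (hq x)) (hy'.sub (hq y))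
  have hnorm : ‖y - x‖ ^ 2 = ⟪y, y - x⟫_ℝ - ⟪x, y - x⟫_ℝ := by
    rw [← inner_sub_left, real_inner_self_eq_norm_sq]
  simp only [sub_apply, smul_apply, innerSL_apply_apply, smul_eq_mul, nsmul_eq_mul] at hmono
  rw [hnorm]
  linarith

theorem le_two_mul_div_mul_of_mul_sq_le {r a μ δ C : ℝ} (hμ : 0 < μ) (hr : 0 ≤ r) (ha : 0 ≤ a)
    (hδ : 0 ≤ δ) (hδC : 2 * (δ * C) ≤ μ) (h : μ * r ^ 2 ≤ δ * (a + C * r) * r) :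
    r ≤ 2 * δ / μ * a := by
  rw [div_mul_eq_mul_div, le_div_iff₀ hμ]
  rcases hr.eq_or_lt with rfl | hr
  · rw [zero_mul]; positivity
  · nlinarith

theorem stmt_0_general {n m : ℕ}
    (g f : EuclideanSpace ℝ (Fin n) → ℝ)
    (f' : EuclideanSpace ℝ (Fin n) → EuclideanSpace ℝ (Fin n))
    (μ Cf δ : ℝ) (hμ : 0 < μ) (hCf : 0 < Cf)
    (hg2 : ContDiff ℝ 2 g)
    (hg : StrongConvexOn Set.univ μ g)
    (hf' : ∀ y, HasGradientAt f (f' y) y)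
    (hfsmooth : LipschitzWith (Real.toNNReal Cf) f')
    (B : EuclideanSpace ℝ (Fin n) →ₗ[ℝ] EuclideanSpace ℝ (Fin m))
    (b : EuclideanSpace ℝ (Fin m))
    (K : Set (EuclideanSpace ℝ (Fin n)))
    (hK : K = {y | B y = b})
    (ystar yδ : EuclideanSpace ℝ (Fin n))
    (hystar : ystar ∈ K) (hystarmin : IsMinOn g K ystar)
    (hyδ : yδ ∈ K) (hyδmin : IsMinOn (fun y => g y + δ * f y) K yδ)
    (hδ : δ ∈ Set.Icc (0:ℝ) (μ / (2 * Cf))) :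
    ‖yδ - ystar‖ ≤ (2 * δ / μ) * ‖f' ystar‖ := by
  obtain ⟨hδ0, hδμ⟩ := hδ
  subst hK
  set d := yδ - ystar
  have hline : ∀ y ∈ {y | B y = b}, ∀ t : ℝ, y + t • d ∈ {y | B y = b} := by
    intro y hy t
    simp_all [d]
  have hg' : ∀ y, HasFDerivAt g (fderiv ℝ g y) y :=
    fun y => (hg2.differentiable (by norm_num) y).hasFDerivAt
  have hopt : fderiv ℝ g ystar d = 0 :=
    hystarmin.hasFDerivAt_apply_eq_zero (hg' ystar) (hline _ hystar)
  have hoptδ : fderiv ℝ g yδ d + δ * ⟪f' yδ, d⟫_ℝ = 0 := by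
    simpa using hyδmin.hasFDerivAt_apply_eq_zero
      ((hg' yδ).add ((hf' yδ).hasFDerivAt.const_mul δ)) (hline _ hyδ)
  have hmono := hg.mul_norm_sub_sq_le_of_hasFDerivAt (mem_univ _) (mem_univ _) (hg' ystar) (hg' yδ)
  have hlip : ‖f' yδ‖ ≤ ‖f' ystar‖ + Cf * ‖d‖ := by
    have := hfsmooth.dist_le_mul yδ ystar
    rw [dist_eq_norm, dist_eq_norm, Real.coe_toNNReal Cf hCf.le] at this
    linarith [norm_le_norm_add_norm_sub' (f' yδ) (f' ystar)]
  have hquad : μ * ‖d‖ ^ 2 ≤ δ * (‖f' ystar‖ + Cf * ‖d‖) * ‖d‖ :=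
    calc μ * ‖d‖ ^ 2 ≤ δ * -⟪f' yδ, d⟫_ℝ := by linarith
      _ ≤ δ * (‖f' yδ‖ * ‖d‖) := by
        gcongr; exact (neg_le_abs _).trans (abs_real_inner_le_norm _ _)
      _ ≤ δ * (‖f' ystar‖ + Cf * ‖d‖) * ‖d‖ := by
        rw [← mul_assoc]; gcongr
  have hδC : 2 * (δ * Cf) ≤ μ := by
    rw [le_div_iff₀ (by positivity)] at hδμ; linarith
  exact le_two_mul_div_mul_of_mul_sq_le hμ (norm_nonneg d) (norm_nonneg _) hδ0 hδC hquad

theorem stmt_0 {n m : ℕ}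
    (g f : EuclideanSpace ℝ (Fin n) → ℝ)
    (f' : EuclideanSpace ℝ (Fin n) → EuclideanSpace ℝ (Fin n))
    (μ Cf δ : ℝ) (hμ : 0 < μ) (hCf : 0 < Cf)
    (hg2 : ContDiff ℝ 2 g)
    (hg : StrongConvexOn Set.univ μ g)
    (hf' : ∀ y, HasGradientAt f (f' y) y)
    (hfsmooth : LipschitzWith (Real.toNNReal Cf) f')
    (B : EuclideanSpace ℝ (Fin n) →ₗ[ℝ] EuclideanSpace ℝ (Fin m))
    (b : EuclideanSpace ℝ (Fin m))
    (K : Set (EuclideanSpace ℝ (Fin n)))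
    (hK : K = {y | B y = b}) (hKne : K.Nonempty)
    (ystar yδ : EuclideanSpace ℝ (Fin n))
    (hystar : ystar ∈ K) (hystarmin : IsMinOn g K ystar)
    (hyδ : yδ ∈ K) (hyδmin : IsMinOn (fun y => g y + δ * f y) K yδ)
    (hδ : δ ∈ Set.Icc (0:ℝ) (μ / (2 * Cf))) :
    ‖yδ - ystar‖ ≤ (2 * δ / μ) * ‖f' ystar‖ :=
  stmt_0_general g f f' μ Cf δ hμ hCf hg2 hg hf' hfsmooth B b K hK ystar yδ hystar hystarmin hyδ
    hyδmin hδ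
end

section
/- Let g(x, ·) be μ_g-strongly convex in y, f(x, ·) be L_f-Lipschitz and C_f-smooth in y, and h(x,y) be affine in y with dual multipliers λ* ∈ ℝ^{d_h}_{≥0}. Let (y*, λ*) be the KKT pair of min_{h(x,y)≤0} g(x,y), so that ∇_y g(x,y*) + ∇_y h(x,y*)ᵀ λ* = 0. Define L(y) = f(x,y) + α₁(g(x,y) + λ*ᵀ h(x,y) − g*(x)) + (α₂/2)‖h_I(x,y)‖², where h_I are the active constraints (with h_I(x,y*) = 0) and g*(x) = g(x,y*) + λ*ᵀ h(x,y*). If α₁ μ_g ≥ 2 C_f, and y' minimizes L, then ‖y' − y*‖ ≤ 2 L_f / (α₁ μ_g). -/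
/-!
Write `G = g + ⟪λ*, h⟫`. Since `y*` minimizes the `μ_g`-strongly convex `G`, quadratic growth gives
`μ_g / 2 * ‖y' - y*‖² ≤ G y' - G y*`. The active penalty vanishes at `y*` and is nonnegative, so
comparing `L y' ≤ L y*` yields `α₁ (G y' - G y*) ≤ f y* - f y' ≤ L_f ‖y' - y*‖`. Hence
`α₁ μ_g / 2 * ‖y' - y*‖² ≤ L_f ‖y' - y*‖`, and dividing by `‖y' - y*‖` gives the bound.
-/

open Set Filter Topology NNReal

section QuadraticGrowth

variable {E : Type*} [NormedAddCommGroup E] [NormedSpace ℝ E] {s : Set E} {f : E → ℝ} {x y : E}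

lemma UniformConvexOn.le_sub_of_isMinOn {φ : ℝ → ℝ} (hf : UniformConvexOn s φ f)
    (hmin : IsMinOn f s x) (hx : x ∈ s) (hy : y ∈ s) : φ ‖y - x‖ ≤ f y - f x := by
  -- Compare `f x` with `f` at the point `t • y + (1 - t) • x` of the segment, then let `t → 0`.
  have hsegment : ∀ t ∈ Ioo (0 : ℝ) 1, (1 - t) * φ ‖y - x‖ ≤ f y - f x := by
    rintro t ⟨ht₀, ht₁⟩
    have hconv := hf.2 hy hx ht₀.le (sub_nonneg.2 ht₁.le) (add_sub_cancel t 1)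
    have hle : f x ≤ f (t • y + (1 - t) • x) := hmin (hf.1 hy hx ht₀.le (sub_nonneg.2 ht₁.le)
      (add_sub_cancel t 1))
    simp only [smul_eq_mul] at hconv
    have : t * ((1 - t) * φ ‖y - x‖) ≤ t * (f y - f x) := by nlinarith
    exact le_of_mul_le_mul_left this ht₀
  have hlim : Tendsto (fun t : ℝ => (1 - t) * φ ‖y - x‖) (𝓝[>] 0) (𝓝 (φ ‖y - x‖)) := by
    have : Tendsto (fun t : ℝ => (1 - t) * φ ‖y - x‖) (𝓝 0) (𝓝 ((1 - 0) * φ ‖y - x‖)) :=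
      (tendsto_const_nhds.sub tendsto_id).mul tendsto_const_nhds
    simpa using this.mono_left nhdsWithin_le_nhds
  exact le_of_tendsto hlim (eventually_of_mem (Ioo_mem_nhdsGT one_pos) hsegment)

lemma StrongConvexOn.mul_sq_norm_sub_le_of_isMinOn {m : ℝ} (hf : StrongConvexOn s m f)
    (hmin : IsMinOn f s x) (hx : x ∈ s) (hy : y ∈ s) : m / 2 * ‖y - x‖ ^ 2 ≤ f y - f x :=
  UniformConvexOn.le_sub_of_isMinOn hf hmin hx hy

end QuadraticGrowth

lemma le_div_of_mul_sq_le {r a m K : ℝ} (hr : 0 ≤ r) (hK : 0 ≤ K) (ham : 0 < a * m)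
    (h : a * (m / 2 * r ^ 2) ≤ K * r) : r ≤ 2 * K / (a * m) := by
  rcases hr.eq_or_lt with rfl | hr
  · positivity
  · rw [le_div_iff₀ ham]
    nlinarith

theorem norm_sub_le_of_isMinOn_penalized {E : Type*} [NormedAddCommGroup E] [NormedSpace ℝ E]
    {f G P : E → ℝ} {K : ℝ≥0} {m α c : ℝ} {x₀ y : E} (hm : 0 < m) (hα : 0 < α)
    (hf : LipschitzWith K f) (hG : StrongConvexOn univ m G) (hx₀ : IsMinOn G univ x₀)
    (hP : ∀ y, 0 ≤ P y) (hPx₀ : P x₀ = 0)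
    (hy : IsMinOn (fun y => f y + α * (G y - c) + P y) univ y) :
    ‖y - x₀‖ ≤ 2 * K / (α * m) := by
  have hgrowth := hG.mul_sq_norm_sub_le_of_isMinOn hx₀ (mem_univ x₀) (mem_univ y)
  have hcompare : f y + α * (G y - c) + P y ≤ f x₀ + α * (G x₀ - c) + P x₀ := hy (mem_univ x₀)
  have hlip : f x₀ - f y ≤ K * ‖y - x₀‖ := by
    simpa [← dist_eq_norm, dist_comm] using (abs_le.1 (hf.dist_le_mul x₀ y)).2
  refine le_div_of_mul_sq_le (norm_nonneg _) K.2 (mul_pos hα hm) ?_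
  calc α * (m / 2 * ‖y - x₀‖ ^ 2) ≤ α * (G y - G x₀) := mul_le_mul_of_nonneg_left hgrowth hα.le
    _ ≤ f x₀ - f y := by linarith [hP y]
    _ ≤ K * ‖y - x₀‖ := hlip

theorem stmt_7_general {dy dh : ℕ}
    (g f : EuclideanSpace ℝ (Fin dy) → ℝ)
    (h : EuclideanSpace ℝ (Fin dy) → EuclideanSpace ℝ (Fin dh))
    (μg Lf α₁ α₂ : ℝ)
    (hμg : 0 < μg) (hLf : 0 ≤ Lf) (hα₁ : 0 < α₁) (hα₂ : 0 ≤ α₂)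
    (hfLipVal : LipschitzWith (Real.toNNReal Lf) f)
    (lamstar : EuclideanSpace ℝ (Fin dh))
    (hGconv : StrongConvexOn Set.univ μg (fun y => g y + (inner ℝ (lamstar) (h y) : ℝ)))
    (ystar : EuclideanSpace ℝ (Fin dy))
    (hystar : IsMinOn (fun y => g y + (inner ℝ (lamstar) (h y) : ℝ)) Set.univ ystar)
    (I : Finset (Fin dh))
    (hactive : ∀ i ∈ I, h ystar i = 0)
    (gstar : ℝ)
    (L : EuclideanSpace ℝ (Fin dy) → ℝ)
    (hL : ∀ y, L y = f y + α₁ * (g y + (inner ℝ (lamstar) (h y) : ℝ) - gstar)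
      + α₂ / 2 * ∑ i ∈ I, (h y i) ^ 2)
    (y' : EuclideanSpace ℝ (Fin dy))
    (hy' : IsMinOn L Set.univ y') :
    ‖y' - ystar‖ ≤ 2 * Lf / (α₁ * μg) := by
  rw [funext hL] at hy'
  have hbound := norm_sub_le_of_isMinOn_penalized hμg hα₁ hfLipVal hGconv hystar
    (P := fun y => α₂ / 2 * ∑ i ∈ I, (h y i) ^ 2) (fun y => by positivity)
    (mul_eq_zero_of_right _ (Finset.sum_eq_zero fun i hi => by simp [hactive i hi])) hy'
  rwa [Real.coe_toNNReal _ hLf] at hbound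

theorem stmt_7 {dy dh : ℕ}
    (g f : EuclideanSpace ℝ (Fin dy) → ℝ)
    (f' : EuclideanSpace ℝ (Fin dy) → EuclideanSpace ℝ (Fin dy))
    (h : EuclideanSpace ℝ (Fin dy) → EuclideanSpace ℝ (Fin dh))
    (μg Lf Cf α₁ α₂ : ℝ)
    (hμg : 0 < μg) (hLf : 0 ≤ Lf) (hCf : 0 ≤ Cf) (hα₁ : 0 < α₁) (hα₂ : 0 ≤ α₂)
    (hf' : ∀ y, HasGradientAt f (f' y) y)
    (hgradbound : ∀ y, ‖f' y‖ ≤ Lf)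
    (hfLipVal : LipschitzWith (Real.toNNReal Lf) f)
    (hfsmooth : LipschitzWith (Real.toNNReal Cf) f')
    (haff : ∃ (T : EuclideanSpace ℝ (Fin dy) →ₗ[ℝ] EuclideanSpace ℝ (Fin dh))
      (c : EuclideanSpace ℝ (Fin dh)), ∀ y, h y = T y + c)
    (lamstar : EuclideanSpace ℝ (Fin dh)) (hlam : ∀ i, 0 ≤ lamstar i)
    (hGconv : StrongConvexOn Set.univ μg (fun y => g y + (inner ℝ (lamstar) (h y) : ℝ)))
    (ystar : EuclideanSpace ℝ (Fin dy))
    (hystar : IsMinOn (fun y => g y + (inner ℝ (lamstar) (h y) : ℝ)) Set.univ ystar)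
    (I : Finset (Fin dh))
    (hactive : ∀ i ∈ I, h ystar i = 0) (hlampos : ∀ i ∈ I, 0 < lamstar i)
    (gstar : ℝ) (hgstar : gstar = g ystar + (inner ℝ (lamstar) (h ystar) : ℝ))
    (L : EuclideanSpace ℝ (Fin dy) → ℝ)
    (hL : ∀ y, L y = f y + α₁ * (g y + (inner ℝ (lamstar) (h y) : ℝ) - gstar)
      + α₂ / 2 * ∑ i ∈ I, (h y i) ^ 2)
    (y' : EuclideanSpace ℝ (Fin dy))
    (hy' : IsMinOn L Set.univ y')
    (hpen : α₁ * μg ≥ 2 * Cf) :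
    ‖y' - ystar‖ ≤ 2 * Lf / (α₁ * μg) :=
  stmt_7_general g f h μg Lf α₁ α₂ hμg hLf hα₁ hα₂ hfLipVal lamstar hGconv ystar hystar I hactive
    gstar L hL y' hy'
end

section
/- In the setting of the penalty function L(y) = f(x,y) + α₁(g(x,y) + λ*ᵀh(x,y) − g*(x)) + (α₂/2)‖h_I(x,y)‖² with minimizer y', the constraint violation of active constraints satisfies ‖h_I(x, y')‖² ≤ (2/α₂)·L_f·‖y' − y*‖, and consequently ‖h_I(x, y')‖ ≤ 2 L_f / √(α₁ α₂ μ_g). -/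
/-! At the penalty minimizer `y'` we have `L y' ≤ L y* = f y*`, since all penalty terms vanish at
the KKT point `y*`. The Lagrangian term of `L y'` is nonnegative because `y*` minimizes
`g + λ*ᵀh`, so `(α₂/2)‖h_I(y')‖² ≤ f y* - f y' ≤ L_f ‖y' - y*‖`. Inserting the a priori bound
`‖y' - y*‖ ≤ 2L_f/(α₁μ_g)` and taking square roots gives the second estimate. -/

open Set NNReal

theorem IsMinOn.penalty_le_lipschitz {X : Type*} [PseudoMetricSpace X] {f G P L : X → ℝ}
    {K : ℝ≥0} {α₁ α₂ : ℝ} {y₀ y : X} (hα₁ : 0 ≤ α₁) (hf : LipschitzWith K f)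
    (hG : IsMinOn G univ y₀) (hP : P y₀ = 0)
    (hL : ∀ y, L y = f y + α₁ * (G y - G y₀) + α₂ / 2 * P y) (hy : IsMinOn L univ y) :
    α₂ / 2 * P y ≤ K * dist y y₀ := by
  have hLy : L y ≤ L y₀ := hy (mem_univ y₀)
  have hGy : 0 ≤ α₁ * (G y - G y₀) := mul_nonneg hα₁ (sub_nonneg.mpr (hG (mem_univ y)))
  have hfy : f y₀ - f y ≤ K * dist y y₀ :=
    (le_abs_self _).trans (by simpa [Real.dist_eq, dist_comm] using hf.dist_le_mul y₀ y)
  rw [hL, hL, sub_self, mul_zero, hP, mul_zero, add_zero, add_zero] at hLy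
  linarith

theorem Real.sqrt_le_div_sqrt_of_le_sq_div {s a c : ℝ} (ha : 0 ≤ a) (hc : 0 < c)
    (hs : s ≤ a ^ 2 / c) : √s ≤ a / √c := by
  rw [Real.sqrt_le_iff, div_pow, Real.sq_sqrt hc.le]
  exact ⟨by positivity, hs⟩

theorem stmt_8_general {dy dh : ℕ}
    (g f : EuclideanSpace ℝ (Fin dy) → ℝ)
    (h : EuclideanSpace ℝ (Fin dy) → EuclideanSpace ℝ (Fin dh))
    (μg Lf α₁ α₂ : ℝ)
    (hμg : 0 < μg) (hLf : 0 ≤ Lf) (hα₁ : 0 < α₁) (hα₂ : 0 < α₂)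
    (hfLipVal : LipschitzWith (Real.toNNReal Lf) f)
    (lamstar : EuclideanSpace ℝ (Fin dh))
    (ystar : EuclideanSpace ℝ (Fin dy))
    (hystar : IsMinOn (fun y => g y + (inner ℝ (lamstar) (h y) : ℝ)) Set.univ ystar)
    (I : Finset (Fin dh))
    (hactive : ∀ i ∈ I, h ystar i = 0)
    (gstar : ℝ) (hgstar : gstar = g ystar + (inner ℝ (lamstar) (h ystar) : ℝ))
    (L : EuclideanSpace ℝ (Fin dy) → ℝ)
    (hL : ∀ y, L y = f y + α₁ * (g y + (inner ℝ (lamstar) (h y) : ℝ) - gstar)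
      + α₂ / 2 * ∑ i ∈ I, (h y i) ^ 2)
    (y' : EuclideanSpace ℝ (Fin dy))
    (hy' : IsMinOn L Set.univ y')
    (hbound : ‖y' - ystar‖ ≤ 2 * Lf / (α₁ * μg)) :
    (∑ i ∈ I, (h y' i) ^ 2 ≤ 2 / α₂ * Lf * ‖y' - ystar‖) ∧
    Real.sqrt (∑ i ∈ I, (h y' i) ^ 2) ≤ 2 * Lf / Real.sqrt (α₁ * α₂ * μg) := by
  subst hgstar
  have hpen := hystar.penalty_le_lipschitz (P := fun y => ∑ i ∈ I, (h y i) ^ 2) hα₁.le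
    hfLipVal (Finset.sum_eq_zero fun i hi => by simp [hactive i hi]) hL hy'
  rw [Real.coe_toNNReal _ hLf, dist_eq_norm] at hpen
  have hviol : ∑ i ∈ I, (h y' i) ^ 2 ≤ 2 / α₂ * Lf * ‖y' - ystar‖ := by
    rw [mul_assoc, div_mul_eq_mul_div, le_div_iff₀ hα₂]
    linarith
  refine ⟨hviol, Real.sqrt_le_div_sqrt_of_le_sq_div (by positivity) (by positivity) ?_⟩
  calc ∑ i ∈ I, (h y' i) ^ 2 ≤ 2 / α₂ * Lf * (2 * Lf / (α₁ * μg)) :=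
        hviol.trans (by gcongr)
    _ = (2 * Lf) ^ 2 / (α₁ * α₂ * μg) := by field_simp

theorem stmt_8 {dy dh : ℕ}
    (g f : EuclideanSpace ℝ (Fin dy) → ℝ)
    (f' : EuclideanSpace ℝ (Fin dy) → EuclideanSpace ℝ (Fin dy))
    (h : EuclideanSpace ℝ (Fin dy) → EuclideanSpace ℝ (Fin dh))
    (μg Lf Cf α₁ α₂ : ℝ)
    (hμg : 0 < μg) (hLf : 0 ≤ Lf) (hCf : 0 ≤ Cf) (hα₁ : 0 < α₁) (hα₂ : 0 < α₂)
    (hf' : ∀ y, HasGradientAt f (f' y) y)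
    (hgradbound : ∀ y, ‖f' y‖ ≤ Lf)
    (hfLipVal : LipschitzWith (Real.toNNReal Lf) f)
    (hfsmooth : LipschitzWith (Real.toNNReal Cf) f')
    (haff : ∃ (T : EuclideanSpace ℝ (Fin dy) →ₗ[ℝ] EuclideanSpace ℝ (Fin dh))
      (c : EuclideanSpace ℝ (Fin dh)), ∀ y, h y = T y + c)
    (lamstar : EuclideanSpace ℝ (Fin dh)) (hlam : ∀ i, 0 ≤ lamstar i)
    (hGconv : StrongConvexOn Set.univ μg (fun y => g y + (inner ℝ (lamstar) (h y) : ℝ)))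
    (ystar : EuclideanSpace ℝ (Fin dy))
    (hystar : IsMinOn (fun y => g y + (inner ℝ (lamstar) (h y) : ℝ)) Set.univ ystar)
    (I : Finset (Fin dh))
    (hactive : ∀ i ∈ I, h ystar i = 0) (hlampos : ∀ i ∈ I, 0 < lamstar i)
    (gstar : ℝ) (hgstar : gstar = g ystar + (inner ℝ (lamstar) (h ystar) : ℝ))
    (L : EuclideanSpace ℝ (Fin dy) → ℝ)
    (hL : ∀ y, L y = f y + α₁ * (g y + (inner ℝ (lamstar) (h y) : ℝ) - gstar)
      + α₂ / 2 * ∑ i ∈ I, (h y i) ^ 2)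
    (y' : EuclideanSpace ℝ (Fin dy))
    (hy' : IsMinOn L Set.univ y')
    (hpen : α₁ * μg ≥ 2 * Cf)
    (hbound : ‖y' - ystar‖ ≤ 2 * Lf / (α₁ * μg)) :
    (∑ i ∈ I, (h y' i) ^ 2 ≤ 2 / α₂ * Lf * ‖y' - ystar‖) ∧
    Real.sqrt (∑ i ∈ I, (h y' i) ^ 2) ≤ 2 * Lf / Real.sqrt (α₁ * α₂ * μg) :=
  stmt_8_general g f h μg Lf α₁ α₂ hμg hLf hα₁ hα₂ hfLipVal lamstar ystar hystar I hactive gstar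
    hgstar L hL y' hy' hbound
end
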